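/- Define h(a) = μ_p·E[(K_p − y(a)·S̃)⁺] + μ_c·E[(y(a)·S̃ − K_c)⁺], where y(a) = e^{(a−r)T} and S̃ = S₀·exp(rT − σ²T/2 + σ√T·Z) with Z standard normal. If μ_c/μ_p = (1 − Φ(d_p))/Φ(d_c), where d_p and d_c are the Black-Scholes d-values at strikes K_p, K_c respectively (d = (ln(S₀/K) + T(r + σ²/2))/(σ√T)), then h(a) > h(r) for all a ≠ r. -/
import Mathlib


open MeasureTheory ProbabilityTheory Real Set
open scoped NNReal ENNReal

/-- Standard normal CDF. -/
noncomputable def Phi (x : ℝ) : ℝ :=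
  ∫ y in Set.Iic x, (Real.sqrt (2 * Real.pi))⁻¹ * Real.exp (-(y ^ 2) / 2)

/-- Standard normal density. -/
noncomputable def phi (y : ℝ) : ℝ := (Real.sqrt (2 * Real.pi))⁻¹ * Real.exp (-(y ^ 2) / 2)

/-- Black-Scholes d value. -/
noncomputable def dBS (S₀ K r T σ : ℝ) : ℝ :=
  (Real.log (S₀ / K) + T * (r + σ ^ 2 / 2)) / (σ * Real.sqrt T)

/-- Black-Scholes call price (closed form). -/
noncomputable def callBS (S₀ K r T σ : ℝ) : ℝ :=
  S₀ * Phi (dBS S₀ K r T σ) - K * Real.exp (-(r * T)) * Phi (dBS S₀ K r T σ - σ * Real.sqrt T)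

/-- Black-Scholes put price (via put-call parity). -/
noncomputable def putBS (S₀ K r T σ : ℝ) : ℝ :=
  callBS S₀ K r T σ - S₀ + K * Real.exp (-(r * T))


lemma phi_eq : phi = gaussianPDFReal 0 1 := by
  funext x
  simp [phi, gaussianPDFReal]

lemma phi_pos (x : ℝ) : 0 < phi x := by
  unfold phi; positivity

lemma continuous_phi : Continuous phi := by
  unfold phi; fun_prop

lemma integrable_phi : Integrable phi := phi_eq ▸ integrable_gaussianPDFReal 0 1

lemma integral_phi : ∫ z, phi z = 1 := phi_eq ▸ integral_gaussianPDFReal_eq_one 0 one_ne_zero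

lemma phi_mul_exp (b z : ℝ) : phi z * Real.exp (b * z) = Real.exp (b ^ 2 / 2) * phi (z - b) := by
  unfold phi
  rw [mul_assoc, ← Real.exp_add, ← mul_assoc, mul_comm (Real.exp (b ^ 2 / 2)), mul_assoc,
    ← Real.exp_add]
  congr 1
  ring_nf

lemma integrable_phi_exp (b : ℝ) : Integrable (fun z => phi z * Real.exp (b * z)) := by
  simp_rw [phi_mul_exp]
  exact (integrable_phi.comp_sub_right b).const_mul _

lemma integral_phi_exp (b : ℝ) : ∫ z, phi z * Real.exp (b * z) = Real.exp (b ^ 2 / 2) := by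
  simp_rw [phi_mul_exp]
  rw [integral_const_mul, integral_sub_right_eq_self phi b, integral_phi, mul_one]

lemma setIntegral_phi (c : ℝ) : ∫ z in Set.Iic c, phi z = Phi c := by
  simp [phi, Phi]

lemma setIntegral_phi_sub (b c : ℝ) : ∫ z in Set.Iic c, phi (z - b) = Phi (c - b) := by
  rw [← setIntegral_phi (c - b)]
  rw [← integral_indicator measurableSet_Iic, ← integral_indicator measurableSet_Iic]
  rw [← integral_sub_right_eq_self (fun z => (Set.Iic (c - b)).indicator phi z) b]
  congr 1
  funext z
  simp only [Set.indicator_apply, Set.mem_Iic]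
  by_cases hz : z ≤ c
  · rw [if_pos hz, if_pos (by linarith)]
  · rw [if_neg hz, if_neg (fun h => hz (by linarith))]

lemma setIntegral_phi_exp (b c : ℝ) :
    ∫ z in Set.Iic c, phi z * Real.exp (b * z) = Real.exp (b ^ 2 / 2) * Phi (c - b) := by
  simp_rw [phi_mul_exp]
  rw [integral_const_mul, setIntegral_phi_sub]

lemma integrable_on_phi_exp (b : ℝ) (s : Set ℝ) :
    IntegrableOn (fun z => phi z * Real.exp (b * z)) s :=
  (integrable_phi_exp b).integrableOn

lemma setIntegral_phi_exp_Ioi (b c : ℝ) :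
    ∫ z in Set.Ioi c, phi z * Real.exp (b * z) = Real.exp (b ^ 2 / 2) * (1 - Phi (c - b)) := by
  have hsplit : (∫ z in Set.Iic c, phi z * Real.exp (b * z))
      + ∫ z in Set.Ioi c, phi z * Real.exp (b * z) = ∫ z, phi z * Real.exp (b * z) :=
    intervalIntegral.integral_Iic_add_Ioi (integrable_on_phi_exp b _) (integrable_on_phi_exp b _)
  rw [setIntegral_phi_exp, integral_phi_exp] at hsplit
  linarith [hsplit]

lemma Phi_pos (x : ℝ) : 0 < Phi x := by
  rw [← setIntegral_phi]
  rw [setIntegral_pos_iff_support_of_nonneg_ae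
    (Filter.Eventually.of_forall fun z => (phi_pos z).le) integrable_phi.integrableOn]
  have : Function.support phi ∩ Set.Iic x = Set.Iic x := by
    rw [Set.inter_eq_right]
    exact fun z _ => (phi_pos z).ne'
  rw [this]
  simp [Real.volume_Iic]

lemma Phi_neg (x : ℝ) : Phi (-x) = 1 - Phi x := by
  have h1 : (∫ z in Set.Iic x, phi z) + ∫ z in Set.Ioi x, phi z = ∫ z, phi z :=
    intervalIntegral.integral_Iic_add_Ioi integrable_phi.integrableOn integrable_phi.integrableOn
  have heven : ∀ z : ℝ, phi (-z) = phi z := fun z => by simp [phi, neg_sq]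
  have h2 : ∫ z in Set.Ioi x, phi z = Phi (-x) := by
    rw [← setIntegral_phi (-x)]
    have h3 := integral_comp_neg_Ioi x phi
    simp_rw [heven] at h3
    rw [h3]
  rw [setIntegral_phi, integral_phi] at h1
  linarith

lemma gauss_int (g : ℝ → ℝ) :
    ∫ z, g z ∂(gaussianReal 0 1) = ∫ z, phi z * g z := by
  rw [gaussianReal_of_var_ne_zero 0 one_ne_zero]
  have hd : gaussianPDF 0 1 = fun x => ((Real.toNNReal (gaussianPDFReal 0 1 x) : ℝ≥0) : ℝ≥0∞) := by
    funext x; rfl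
  rw [hd, integral_withDensity_eq_integral_smul
    ((measurable_gaussianPDFReal 0 1).real_toNNReal) g]
  congr 1
  funext z
  rw [NNReal.smul_def, smul_eq_mul, Real.coe_toNNReal _ (gaussianPDFReal_nonneg 0 1 z), phi_eq]

lemma indicator_Ioo_integral_pos (u v : ℝ) (huv : u < v) (f : ℝ → ℝ) (hf : Continuous f)
    (hpos : ∀ z ∈ Set.Ioo u v, 0 < f z) :
    0 < ∫ z, (Set.Ioo u v).indicator f z := by
  rw [integral_indicator measurableSet_Ioo]
  rw [setIntegral_pos_iff_support_of_nonneg_ae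
    ((ae_restrict_mem measurableSet_Ioo).mono fun z hz => (hpos z hz).le)
    (hf.integrableOn_Icc.mono_set Set.Ioo_subset_Icc_self)]
  calc (0 : ℝ≥0∞) < volume (Set.Ioo u v) := by rw [Real.volume_Ioo]; simpa using huv
    _ ≤ volume (Function.support f ∩ Set.Ioo u v) :=
        measure_mono fun z hz => ⟨(hpos z hz).ne', hz⟩

lemma main_aux (Kp Kc μp μc b Ep t : ℝ) (s : ℝ → ℝ)
    (hKp : 0 < Kp) (hKc : 0 < Kc) (hμp : 0 < μp) (hμc : 0 < μc) (hb : 0 < b)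
    (hs : ∀ z, s z = Ep * Real.exp (b * z)) (hEp : 0 < Ep)
    (cp cc : ℝ) (hscp : s cp = Kp) (hscc : s cc = Kc)
    (hbal : μp * ∫ z in Set.Iic cp, phi z * s z = μc * ∫ z in Set.Ioi cc, phi z * s z)
    (ht0 : 0 < t) (ht1 : t ≠ 1) :
    μp * (∫ z, phi z * max (Kp - s z) 0) + μc * (∫ z, phi z * max (s z - Kc) 0)
      < μp * (∫ z, phi z * max (Kp - t * s z) 0) + μc * (∫ z, phi z * max (t * s z - Kc) 0) := by
  have hs_pos : ∀ z, 0 < s z := fun z => (hs z) ▸ mul_pos hEp (Real.exp_pos _)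
  have hs_mono : StrictMono s := by
    intro z w h
    rw [hs z, hs w]
    have hbz : b * z < b * w := by nlinarith
    exact mul_lt_mul_of_pos_left (Real.exp_lt_exp.mpr hbz) hEp
  have hkey : ∀ z, s (z + Real.log t / b) = t * s z := fun z => by
    have hb' : b * (z + Real.log t / b) = b * z + Real.log t := by
      field_simp
    rw [hs, hs, hb', Real.exp_add, Real.exp_log ht0]; ring
  have hcont_s : Continuous s := by
    have : s = fun z => Ep * Real.exp (b * z) := funext hs
    rw [this]; fun_prop
  -- crossing facts
  have hcpz : ∀ z, z ≤ cp → s z ≤ Kp := fun z h => hscp ▸ hs_mono.monotone h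
  have hcpz' : ∀ z, cp < z → Kp < s z := fun z h => hscp ▸ hs_mono h
  have hccz : ∀ z, z ≤ cc → s z ≤ Kc := fun z h => hscc ▸ hs_mono.monotone h
  have hccz' : ∀ z, cc < z → Kc < s z := fun z h => hscc ▸ hs_mono h
  have htcross_p : ∀ z, z < cp - Real.log t / b → t * s z < Kp := fun z h => by
    rw [← hkey]; exact hscp ▸ hs_mono (by linarith)
  have htcross_c : ∀ z, cc - Real.log t / b < z → Kc < t * s z := fun z h => by
    rw [← hkey]; exact hscc ▸ hs_mono (by linarith)
  -- integrability
  have hint_s : Integrable (fun z => phi z * s z) := by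
    have heq : (fun z => phi z * s z) = fun z => Ep * (phi z * Real.exp (b * z)) :=
      funext fun z => by rw [hs]; ring
    rw [heq]; exact (integrable_phi_exp b).const_mul Ep
  have hint_P : ∀ u : ℝ, 0 ≤ u → Integrable (fun z => phi z * max (Kp - u * s z) 0) := by
    intro u hu
    refine Integrable.mono (integrable_phi.const_mul Kp) ?_ (Filter.Eventually.of_forall fun z => ?_)
    · exact (continuous_phi.mul ((continuous_const.sub (continuous_const.mul hcont_s)).max
        continuous_const)).aestronglyMeasurable
    · have h1 : 0 ≤ phi z * max (Kp - u * s z) 0 := mul_nonneg (phi_pos z).le (le_max_right _ _)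
      have h2 : phi z * max (Kp - u * s z) 0 ≤ Kp * phi z := by
        rw [mul_comm Kp]
        refine mul_le_mul_of_nonneg_left (max_le ?_ hKp.le) (phi_pos z).le
        nlinarith [hs_pos z]
      rw [Real.norm_eq_abs, Real.norm_eq_abs, abs_of_nonneg h1,
        abs_of_nonneg (mul_nonneg hKp.le (phi_pos z).le)]
      exact h2
  have hint_C : ∀ u : ℝ, 0 ≤ u → Integrable (fun z => phi z * max (u * s z - Kc) 0) := by
    intro u hu
    refine Integrable.mono (hint_s.const_mul u) ?_ (Filter.Eventually.of_forall fun z => ?_)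
    · exact (continuous_phi.mul (((continuous_const.mul hcont_s).sub continuous_const).max
        continuous_const)).aestronglyMeasurable
    · have h1 : 0 ≤ phi z * max (u * s z - Kc) 0 := mul_nonneg (phi_pos z).le (le_max_right _ _)
      have h2 : phi z * max (u * s z - Kc) 0 ≤ u * (phi z * s z) := by
        have : phi z * max (u * s z - Kc) 0 ≤ phi z * (u * s z) := by
          refine mul_le_mul_of_nonneg_left (max_le ?_ ?_) (phi_pos z).le
          · linarith
          · exact mul_nonneg hu (hs_pos z).le
        linarith [this]
      rw [Real.norm_eq_abs, Real.norm_eq_abs, abs_of_nonneg h1,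
        abs_of_nonneg (mul_nonneg hu (mul_nonneg (phi_pos z).le (hs_pos z).le))]
      exact h2
  have hint_P1 : Integrable (fun z => phi z * max (Kp - s z) 0) := by
    simpa using hint_P 1 zero_le_one
  have hint_C1 : Integrable (fun z => phi z * max (s z - Kc) 0) := by
    simpa using hint_C 1 zero_le_one
  have hint_IndP : Integrable ((Set.Iic cp).indicator fun z => phi z * s z) :=
    hint_s.indicator measurableSet_Iic
  have hint_IndC : Integrable ((Set.Ioi cc).indicator fun z => phi z * s z) :=
    hint_s.indicator measurableSet_Ioi
  have hint_gp_core : Integrable (fun z => phi z * (Kp - t * s z)) := by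
    have heq : (fun z => phi z * (Kp - t * s z)) = fun z => Kp * phi z - t * (phi z * s z) :=
      funext fun z => by ring
    rw [heq]; exact (integrable_phi.const_mul Kp).sub (hint_s.const_mul t)
  have hint_gc_core : Integrable (fun z => phi z * (t * s z - Kc)) := by
    have heq : (fun z => phi z * (t * s z - Kc)) = fun z => t * (phi z * s z) - Kc * phi z :=
      funext fun z => by ring
    rw [heq]; exact (hint_s.const_mul t).sub (integrable_phi.const_mul Kc)
  have hint_Gp : Integrable ((Set.Ioo cp (cp - Real.log t / b)).indicator
      fun z => phi z * (Kp - t * s z)) := hint_gp_core.indicator measurableSet_Ioo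
  have hint_Gc : Integrable ((Set.Ioo (cc - Real.log t / b) cc).indicator
      fun z => phi z * (t * s z - Kc)) := hint_gc_core.indicator measurableSet_Ioo
  -- pointwise inequalities
  have hpointP : ∀ z, phi z * max (Kp - s z) 0
      - (t - 1) * (Set.Iic cp).indicator (fun z => phi z * s z) z
      + (Set.Ioo cp (cp - Real.log t / b)).indicator (fun z => phi z * (Kp - t * s z)) z
      ≤ phi z * max (Kp - t * s z) 0 := by
    intro z
    have hmax : phi z * (Kp - t * s z) ≤ phi z * max (Kp - t * s z) 0 :=
      mul_le_mul_of_nonneg_left (le_max_left _ _) (phi_pos z).le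
    have hmax0 : 0 ≤ phi z * max (Kp - t * s z) 0 :=
      mul_nonneg (phi_pos z).le (le_max_right _ _)
    rcases le_or_gt z cp with hz | hz
    · rw [Set.indicator_of_mem (Set.mem_Iic.mpr hz),
        Set.indicator_of_notMem (fun hmem => absurd hmem.1 (not_lt.mpr hz)),
        max_eq_left (by linarith [hcpz z hz] : (0:ℝ) ≤ Kp - s z)]
      calc phi z * (Kp - s z) - (t - 1) * (phi z * s z) + 0
          = phi z * (Kp - t * s z) := by ring
        _ ≤ _ := hmax
    · rw [Set.indicator_of_notMem (fun hmem => absurd (Set.mem_Iic.mp hmem) (not_le.mpr hz)),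
        max_eq_right (by linarith [hcpz' z hz] : Kp - s z ≤ 0)]
      by_cases hz2 : z ∈ Set.Ioo cp (cp - Real.log t / b)
      · rw [Set.indicator_of_mem hz2]
        calc phi z * 0 - (t - 1) * 0 + phi z * (Kp - t * s z)
            = phi z * (Kp - t * s z) := by ring
          _ ≤ _ := hmax
      · rw [Set.indicator_of_notMem hz2]
        calc phi z * 0 - (t - 1) * 0 + 0 = 0 := by ring
          _ ≤ _ := hmax0
  have hpointC : ∀ z, phi z * max (s z - Kc) 0
      + (t - 1) * (Set.Ioi cc).indicator (fun z => phi z * s z) z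
      + (Set.Ioo (cc - Real.log t / b) cc).indicator (fun z => phi z * (t * s z - Kc)) z
      ≤ phi z * max (t * s z - Kc) 0 := by
    intro z
    have hmax : phi z * (t * s z - Kc) ≤ phi z * max (t * s z - Kc) 0 :=
      mul_le_mul_of_nonneg_left (le_max_left _ _) (phi_pos z).le
    have hmax0 : 0 ≤ phi z * max (t * s z - Kc) 0 :=
      mul_nonneg (phi_pos z).le (le_max_right _ _)
    rcases lt_or_ge cc z with hz | hz
    · rw [Set.indicator_of_mem (Set.mem_Ioi.mpr hz),
        Set.indicator_of_notMem (fun hmem => absurd hmem.2 (not_lt.mpr hz.le)),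
        max_eq_left (by linarith [hccz' z hz] : (0:ℝ) ≤ s z - Kc)]
      calc phi z * (s z - Kc) + (t - 1) * (phi z * s z) + 0
          = phi z * (t * s z - Kc) := by ring
        _ ≤ _ := hmax
    · rw [Set.indicator_of_notMem (fun hmem => absurd (Set.mem_Ioi.mp hmem) (not_lt.mpr hz)),
        max_eq_right (by linarith [hccz z hz] : s z - Kc ≤ 0)]
      by_cases hz2 : z ∈ Set.Ioo (cc - Real.log t / b) cc
      · rw [Set.indicator_of_mem hz2]
        calc phi z * 0 + (t - 1) * 0 + phi z * (t * s z - Kc)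
            = phi z * (t * s z - Kc) := by ring
          _ ≤ _ := hmax
      · rw [Set.indicator_of_notMem hz2]
        calc phi z * 0 + (t - 1) * 0 + 0 = 0 := by ring
          _ ≤ _ := hmax0
  -- integrate
  have hint_IndP' : Integrable (fun z =>
      (t - 1) * (Set.Iic cp).indicator (fun z => phi z * s z) z) :=
    hint_IndP.const_mul (t - 1)
  have hint_PA : Integrable (fun z => phi z * max (Kp - s z) 0
      - (t - 1) * (Set.Iic cp).indicator (fun z => phi z * s z) z) :=
    hint_P1.sub hint_IndP'
  have hstepP : (∫ z, phi z * max (Kp - s z) 0)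
      - (t - 1) * (∫ z in Set.Iic cp, phi z * s z)
      + (∫ z, (Set.Ioo cp (cp - Real.log t / b)).indicator (fun z => phi z * (Kp - t * s z)) z)
      ≤ ∫ z, phi z * max (Kp - t * s z) 0 := by
    have hmono := integral_mono (hint_PA.add hint_Gp) (hint_P t ht0.le) hpointP
    simp only [Pi.add_apply] at hmono
    simp only [integral_add hint_PA hint_Gp, integral_sub hint_P1 hint_IndP', integral_const_mul,
      integral_indicator measurableSet_Iic] at hmono
    exact hmono
  have hint_IndC' : Integrable (fun z =>
      (t - 1) * (Set.Ioi cc).indicator (fun z => phi z * s z) z) :=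
    hint_IndC.const_mul (t - 1)
  have hint_CA : Integrable (fun z => phi z * max (s z - Kc) 0
      + (t - 1) * (Set.Ioi cc).indicator (fun z => phi z * s z) z) :=
    hint_C1.add hint_IndC'
  have hstepC : (∫ z, phi z * max (s z - Kc) 0)
      + (t - 1) * (∫ z in Set.Ioi cc, phi z * s z)
      + (∫ z, (Set.Ioo (cc - Real.log t / b) cc).indicator (fun z => phi z * (t * s z - Kc)) z)
      ≤ ∫ z, phi z * max (t * s z - Kc) 0 := by
    have hmono := integral_mono (hint_CA.add hint_Gc) (hint_C t ht0.le) hpointC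
    simp only [Pi.add_apply] at hmono
    simp only [integral_add hint_CA hint_Gc, integral_add hint_C1 hint_IndC', integral_const_mul,
      integral_indicator measurableSet_Ioi] at hmono
    exact hmono
  -- nonnegativity of the gap terms
  have hεp : 0 ≤ ∫ z, (Set.Ioo cp (cp - Real.log t / b)).indicator
      (fun z => phi z * (Kp - t * s z)) z := by
    refine integral_nonneg fun z => Set.indicator_nonneg (fun w hw => ?_) z
    exact mul_nonneg (phi_pos w).le (by linarith [htcross_p w hw.2])
  have hεc : 0 ≤ ∫ z, (Set.Ioo (cc - Real.log t / b) cc).indicator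
      (fun z => phi z * (t * s z - Kc)) z := by
    refine integral_nonneg fun z => Set.indicator_nonneg (fun w hw => ?_) z
    exact mul_nonneg (phi_pos w).le (by linarith [htcross_c w hw.1])
  -- strict positivity of one gap term
  have hstrict : 0 < μp * (∫ z, (Set.Ioo cp (cp - Real.log t / b)).indicator
        (fun z => phi z * (Kp - t * s z)) z)
      + μc * (∫ z, (Set.Ioo (cc - Real.log t / b) cc).indicator
        (fun z => phi z * (t * s z - Kc)) z) := by
    rcases ht1.lt_or_gt with hlt | hgt
    · have hlog : Real.log t < 0 := Real.log_neg ht0 hlt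
      have hne : cp < cp - Real.log t / b := by
        have h0 : Real.log t / b < 0 := div_neg_of_neg_of_pos hlog hb
        linarith
      have hpos := indicator_Ioo_integral_pos cp (cp - Real.log t / b) hne
        (fun z => phi z * (Kp - t * s z))
        (continuous_phi.mul (continuous_const.sub (continuous_const.mul hcont_s)))
        (fun z hz => mul_pos (phi_pos z) (by linarith [htcross_p z hz.2]))
      nlinarith [mul_pos hμp hpos, mul_nonneg hμc.le hεc]
    · have hlog : 0 < Real.log t := Real.log_pos hgt
      have hne : cc - Real.log t / b < cc := by
        have h0 : 0 < Real.log t / b := div_pos hlog hb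
        linarith
      have hpos := indicator_Ioo_integral_pos (cc - Real.log t / b) cc hne
        (fun z => phi z * (t * s z - Kc))
        (continuous_phi.mul ((continuous_const.mul hcont_s).sub continuous_const))
        (fun z hz => mul_pos (phi_pos z) (by linarith [htcross_c z hz.1]))
      nlinarith [mul_pos hμc hpos, mul_nonneg hμp.le hεp]
  -- assemble
  have hA := mul_le_mul_of_nonneg_left hstepP hμp.le
  have hB := mul_le_mul_of_nonneg_left hstepC hμc.le
  have hbal2 : (t - 1) * (μp * ∫ z in Set.Iic cp, phi z * s z)
      = (t - 1) * (μc * ∫ z in Set.Ioi cc, phi z * s z) := by rw [hbal]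
  nlinarith [hA, hB, hbal2, hstrict]


theorem stmt6 (S₀ Kp Kc σ T r μp μc : ℝ) (hS : 0 < S₀) (hKp : 0 < Kp) (hKc : 0 < Kc)
    (hσ : 0 < σ) (hT : 0 < T) (hr : 0 ≤ r) (hμp : 0 < μp) (hμc : 0 < μc)
    (h : ℝ → ℝ)
    (hh : ∀ a : ℝ, h a =
      μp * (∫ z, max (Kp - Real.exp ((a - r) * T) *
              (S₀ * Real.exp (r * T - σ ^ 2 * T / 2 + σ * Real.sqrt T * z))) 0
            ∂(gaussianReal 0 1)) +
      μc * (∫ z, max (Real.exp ((a - r) * T) *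
              (S₀ * Real.exp (r * T - σ ^ 2 * T / 2 + σ * Real.sqrt T * z)) - Kc) 0
            ∂(gaussianReal 0 1)))
    (hratio : μc / μp = (1 - Phi (dBS S₀ Kp r T σ)) / Phi (dBS S₀ Kc r T σ)) :
    ∀ a : ℝ, a ≠ r → h a > h r := by
  intro a ha
  have hbpos : 0 < σ * Real.sqrt T := mul_pos hσ (Real.sqrt_pos.mpr hT)
  have hsqT : Real.sqrt T * Real.sqrt T = T := Real.mul_self_sqrt hT.le
  -- the crossing points
  have hsK : ∀ K : ℝ, 0 < K →
      S₀ * Real.exp (r * T - σ ^ 2 * T / 2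
        + σ * Real.sqrt T * (σ * Real.sqrt T - dBS S₀ K r T σ)) = K := by
    intro K hK
    have hd : (σ * Real.sqrt T) * dBS S₀ K r T σ
        = Real.log (S₀ / K) + T * (r + σ ^ 2 / 2) := by
      rw [dBS]
      field_simp
    have hexp : r * T - σ ^ 2 * T / 2 + σ * Real.sqrt T * (σ * Real.sqrt T - dBS S₀ K r T σ)
        = -Real.log (S₀ / K) := by
      rw [mul_sub, hd, show σ * Real.sqrt T * (σ * Real.sqrt T)
        = σ ^ 2 * (Real.sqrt T * Real.sqrt T) by ring, hsqT]
      ring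
    rw [hexp, Real.exp_neg, Real.exp_log (div_pos hS hK)]
    field_simp
  -- value of the truncated expectations
  have hconst : S₀ * Real.exp (r * T - σ ^ 2 * T / 2) * Real.exp ((σ * Real.sqrt T) ^ 2 / 2)
      = S₀ * Real.exp (r * T) := by
    rw [mul_assoc, ← Real.exp_add, show (σ * Real.sqrt T) ^ 2
      = σ ^ 2 * (Real.sqrt T * Real.sqrt T) by ring, hsqT]
    norm_num
  have heqz : ∀ z : ℝ, phi z * (S₀ * Real.exp (r * T - σ ^ 2 * T / 2 + σ * Real.sqrt T * z))
      = (S₀ * Real.exp (r * T - σ ^ 2 * T / 2)) * (phi z * Real.exp (σ * Real.sqrt T * z)) :=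
    fun z => by rw [Real.exp_add]; ring
  have hIic : ∀ c : ℝ,
      (∫ z in Set.Iic c, phi z * (S₀ * Real.exp (r * T - σ ^ 2 * T / 2 + σ * Real.sqrt T * z)))
        = S₀ * Real.exp (r * T) * Phi (c - σ * Real.sqrt T) := by
    intro c
    simp_rw [heqz]
    rw [integral_const_mul, setIntegral_phi_exp, ← mul_assoc, hconst]
  have hIoi : ∀ c : ℝ,
      (∫ z in Set.Ioi c, phi z * (S₀ * Real.exp (r * T - σ ^ 2 * T / 2 + σ * Real.sqrt T * z)))
        = S₀ * Real.exp (r * T) * (1 - Phi (c - σ * Real.sqrt T)) := by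
    intro c
    simp_rw [heqz]
    rw [integral_const_mul, setIntegral_phi_exp_Ioi, ← mul_assoc, hconst]
  -- balance
  have hr' : μc * Phi (dBS S₀ Kc r T σ) = (1 - Phi (dBS S₀ Kp r T σ)) * μp :=
    (div_eq_div_iff hμp.ne' (Phi_pos _).ne').mp hratio
  have hbal : μp * ∫ z in Set.Iic (σ * Real.sqrt T - dBS S₀ Kp r T σ),
        phi z * (S₀ * Real.exp (r * T - σ ^ 2 * T / 2 + σ * Real.sqrt T * z))
      = μc * ∫ z in Set.Ioi (σ * Real.sqrt T - dBS S₀ Kc r T σ),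
        phi z * (S₀ * Real.exp (r * T - σ ^ 2 * T / 2 + σ * Real.sqrt T * z)) := by
    rw [hIic, hIoi,
      show σ * Real.sqrt T - dBS S₀ Kp r T σ - σ * Real.sqrt T = -dBS S₀ Kp r T σ by ring,
      show σ * Real.sqrt T - dBS S₀ Kc r T σ - σ * Real.sqrt T = -dBS S₀ Kc r T σ by ring,
      Phi_neg, Phi_neg]
    have : (1 : ℝ) - (1 - Phi (dBS S₀ Kc r T σ)) = Phi (dBS S₀ Kc r T σ) := by ring
    rw [this]
    linear_combination (-(S₀ * Real.exp (r * T))) * hr'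
  have ht1 : Real.exp ((a - r) * T) ≠ 1 := by
    rw [Ne, Real.exp_eq_one_iff, mul_eq_zero]
    push_neg
    exact ⟨sub_ne_zero.mpr ha, hT.ne'⟩
  rw [hh a, hh r, gauss_int, gauss_int, gauss_int, gauss_int]
  simp only [sub_self, zero_mul, Real.exp_zero, one_mul]
  exact main_aux Kp Kc μp μc (σ * Real.sqrt T) (S₀ * Real.exp (r * T - σ ^ 2 * T / 2))
    (Real.exp ((a - r) * T))
    (fun z => S₀ * Real.exp (r * T - σ ^ 2 * T / 2 + σ * Real.sqrt T * z))
    hKp hKc hμp hμc hbpos (fun z => by simp only [Real.exp_add]; ring) (by positivity)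
    (σ * Real.sqrt T - dBS S₀ Kp r T σ) (σ * Real.sqrt T - dBS S₀ Kc r T σ)
    (hsK Kp hKp) (hsK Kc hKc) hbal (Real.exp_pos _) ht1
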